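/- Fix a distribution P over a countable measurable space X and a set A of probability distributions on X with P(P̂_n ∈ A) > 0. Then (1/n) · ln P(P̂_n ∈ A) = − D(ω_A ‖ P) − (1/n) · D(μ_A ‖ ω_A^n), where ω_A^n is the n-fold product distribution of ω_A on X^n. -/

import Mathlib

open scoped ENNReal

/-- Relative entropy (KL divergence) `D(Q ‖ R) = E_{y ∼ Q}[ln (Q y / R y)]`
for PMFs on a countable type. -/
noncomputable def klDiv {Y : Type*} (Q R : PMF Y) : ℝ :=
  ∑' y, (Q y).toReal * Real.log ((Q y).toReal / (R y).toReal)

/-- Cross entropy `H(Q, P) = E_{y ∼ Q}[ln (1 / P y)]`. -/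
noncomputable def crossEnt {Y : Type*} (Q P : PMF Y) : ℝ :=
  ∑' y, (Q y).toReal * Real.log (1 / (P y).toReal)

/-- Entropy `H(Q) = E_{y ∼ Q}[ln (1 / Q y)]`. -/
noncomputable def ent {Y : Type*} (Q : PMF Y) : ℝ :=
  ∑' y, (Q y).toReal * Real.log (1 / (Q y).toReal)

/-- The `n`-fold product distribution `P^n` on `X^n`, assigning to each
`y ∈ X^n` the probability `∏ i, P (y i)`. -/
noncomputable def piPMF {X : Type*} (n : ℕ) (P : PMF X) : PMF (Fin n → X) :=
  ⟨fun y => ∏ i, P (y i), by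
    rw [Summable.hasSum_iff ENNReal.summable]
    induction n with
    | zero =>
      rw [tsum_eq_single (default : Fin 0 → X)
        (fun b hb => absurd (Subsingleton.elim b default) hb)]
      simp
    | succ n ih =>
      rw [← (Fin.consEquiv (fun _ : Fin (n+1) => X)).tsum_eq, ENNReal.tsum_prod']
      simp only [Fin.consEquiv_apply, Fin.prod_univ_succ, Fin.cons_zero, Fin.cons_succ]
      simp_rw [ENNReal.tsum_mul_left, ih, mul_one]
      exact P.tsum_coe⟩

/-- The empirical measure `μ̂_Z` of a sample `Z ∈ X^n`: it assigns probability
`(1/n) · #{i : Z i = u}` to each point `u`, i.e. it is the pushforward of the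
uniform distribution on `Fin n` along `Z`. -/
noncomputable def empiricalPMF {X : Type*} (n : ℕ) [NeZero n] (Z : Fin n → X) : PMF X :=
  (PMF.uniformOfFintype (Fin n)).map Z

/-- `P(P̂_n ∈ A)`: the probability, under an i.i.d. sample `Z ∼ P^n`, that the
empirical measure `μ̂_Z` lies in the set `A` of distributions. -/
noncomputable def probIn {X : Type*} (n : ℕ) [NeZero n] (P : PMF X) (A : Set (PMF X)) : ℝ≥0∞ :=
  (piPMF n P).toOuterMeasure {Z | empiricalPMF n Z ∈ A}

/-- The convex combination `lam • Q₁ + (1 - lam) • Q₂` of two PMFs. -/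
noncomputable def mixPMF {Y : Type*} (lam : ℝ≥0∞) (hlam : lam ≤ 1) (Q₁ Q₂ : PMF Y) : PMF Y :=
  ⟨fun y => lam * Q₁ y + (1 - lam) * Q₂ y, by
    rw [Summable.hasSum_iff ENNReal.summable,
      ENNReal.tsum_add, ENNReal.tsum_mul_left,
      ENNReal.tsum_mul_left, Q₁.tsum_coe, Q₂.tsum_coe, mul_one, mul_one,
      add_tsub_cancel_of_le hlam]⟩

/-- A set of PMFs is convex if it is closed under convex combinations. -/
def IsConvexPMFSet {Y : Type*} (A : Set (PMF Y)) : Prop :=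
  ∀ Q₁ ∈ A, ∀ Q₂ ∈ A, ∀ (lam : ℝ≥0∞) (hlam : lam ≤ 1), mixPMF lam hlam Q₁ Q₂ ∈ A

/-! On the event `{μ̂_Z ∈ A}` the conditional law is `μ_A = P^n / p` with `p = P(P̂_n ∈ A)`, so
wherever `μ_A(y) > 0`,
`ln (μ_A(y) / ω_A^n(y)) = -∑ᵢ ln (ω_A(yᵢ) / P(yᵢ)) - ln p`.
Integrating against `μ_A`, each of whose coordinates has law `ω_A`, gives
`D(μ_A ‖ ω_A^n) = -n D(ω_A ‖ P) - ln p`, which is the identity.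
The only analytic point is absolute convergence: `ω_A ≤ P / p`, so the likelihood ratio
`ω_A / P` is bounded and `ω_A |ln (ω_A / P)| ≤ ω_A |ln p| + P`. -/

open MeasureTheory
open scoped NNReal

theorem Real.mul_abs_log_div_le {x y K : ℝ} (hx : 0 ≤ x) (hy : 0 ≤ y) (hxy : x ≤ K * y) :
    x * |Real.log (x / y)| ≤ x * |Real.log K| + y := by
  rcases hx.eq_or_lt with rfl | hx
  · simp [hy]
  have hy : 0 < y := lt_of_le_of_ne hy (by rintro rfl; simp at hxy; linarith)
  rcases le_total 0 (Real.log (x / y)) with hlog | hlog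
  · have : Real.log (x / y) ≤ Real.log K :=
      Real.log_le_log (by positivity) ((div_le_iff₀ hy).2 hxy)
    rw [abs_of_nonneg hlog]
    nlinarith [le_abs_self (Real.log K)]
  · have : x * -Real.log (x / y) ≤ y - x := calc
      x * -Real.log (x / y) = x * Real.log (y / x) := by rw [← Real.log_inv, inv_div]
      _ ≤ x * (y / x - 1) := by gcongr; exact Real.log_le_sub_one_of_pos (by positivity)
      _ = y - x := by field_simp
    rw [abs_of_nonpos hlog]
    nlinarith [abs_nonneg (Real.log K)]

namespace PMF

variable {α β : Type*}

theorem summable_toReal (p : PMF α) : Summable fun a => (p a).toReal :=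
  ENNReal.summable_toReal p.tsum_coe_ne_top

theorem apply_eq_div_of_cond {μ ν : PMF α} {s : Set α}
    (h : ∀ a, μ a = ν.toOuterMeasure ({a} ∩ s) / ν.toOuterMeasure s) {a : α} (ha : μ a ≠ 0) :
    μ a = ν a / ν.toOuterMeasure s := by
  rw [h a] at ha ⊢
  by_cases has : a ∈ s
  · rw [Set.singleton_inter_of_mem has, toOuterMeasure_apply_singleton]
  · simp [Set.singleton_inter_of_notMem has] at ha

theorem map_apply_le_mul_map_apply {μ ν : PMF α} {c : ℝ≥0∞} (h : ∀ a, μ a ≤ c * ν a)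
    (k : α → β) (b : β) : μ.map k b ≤ c * ν.map k b := by
  simp only [map_apply, ← ENNReal.tsum_mul_left]
  refine ENNReal.tsum_le_tsum fun a => ?_
  split_ifs
  · exact h a
  · simp

variable [MeasurableSpace α] [MeasurableSingletonClass α] [Countable α]

theorem integrable_toMeasure_iff {E : Type*} [NormedAddCommGroup E] (p : PMF α) (f : α → E) :
    Integrable f p.toMeasure ↔ Summable fun a => (p a).toReal * ‖f a‖ := by
  have hterm : ∀ a, ‖f a‖ₑ * p a = ((p a).toNNReal * ‖f a‖₊ : ℝ≥0) := fun a => by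
    rw [ENNReal.coe_mul, ENNReal.coe_toNNReal (p.apply_ne_top a), mul_comm, enorm_eq_nnnorm]
  rw [Integrable, and_iff_right StronglyMeasurable.of_discrete.aestronglyMeasurable,
    hasFiniteIntegral_iff_enorm, lintegral_countable']
  simp_rw [p.toMeasure_apply_singleton _ (MeasurableSet.singleton _), hterm, lt_top_iff_ne_top,
    ENNReal.tsum_coe_ne_top_iff_summable, ← NNReal.summable_coe, NNReal.coe_mul, coe_nnnorm,
    ENNReal.coe_toNNReal_eq_toReal]

theorem integrable_log_div_of_le_mul {q r : PMF α} {K : ℝ}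
    (h : ∀ a, (q a).toReal ≤ K * (r a).toReal) :
    Integrable (fun a => Real.log ((q a).toReal / (r a).toReal)) q.toMeasure := by
  rw [integrable_toMeasure_iff]
  refine Summable.of_nonneg_of_le (fun a => by positivity)
    (fun a => Real.mul_abs_log_div_le ENNReal.toReal_nonneg ENNReal.toReal_nonneg (h a))
    ((q.summable_toReal.mul_right _).add r.summable_toReal)

variable [MeasurableSpace β] [MeasurableSingletonClass β] [Countable β]

theorem integral_comp {E : Type*} [NormedAddCommGroup E] [NormedSpace ℝ E] (p : PMF α)
    (k : α → β) (g : β → E) :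
    ∫ a, g (k a) ∂p.toMeasure = ∫ b, g b ∂(p.map k).toMeasure := by
  rw [← toMeasure_map k p Measurable.of_discrete,
    integral_map Measurable.of_discrete.aemeasurable
      StronglyMeasurable.of_discrete.aestronglyMeasurable]

theorem integrable_comp_iff {E : Type*} [NormedAddCommGroup E] (p : PMF α) (k : α → β)
    (g : β → E) :
    Integrable (fun a => g (k a)) p.toMeasure ↔ Integrable g (p.map k).toMeasure := by
  rw [← toMeasure_map k p Measurable.of_discrete,
    integrable_map_measure StronglyMeasurable.of_discrete.aestronglyMeasurable
      Measurable.of_discrete.aemeasurable]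
  rfl

end PMF

theorem klDiv_eq_integral {α : Type*} [MeasurableSpace α] [MeasurableSingletonClass α]
    {q r : PMF α} (h : Integrable (fun a => Real.log ((q a).toReal / (r a).toReal)) q.toMeasure) :
    klDiv q r = ∫ a, Real.log ((q a).toReal / (r a).toReal) ∂q.toMeasure := by
  rw [PMF.integral_eq_tsum _ _ h]
  rfl

section Product

variable {X : Type*} {n : ℕ}

@[simp]
theorem piPMF_apply (P : PMF X) (y : Fin n → X) : piPMF n P y = ∏ i, P (y i) := rfl

theorem piPMF_map_eval (P : PMF X) (i : Fin n) : (piPMF n P).map (fun y => y i) = P := by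
  cases n with
  | zero => exact i.elim0
  | succ n =>
    classical
    ext u
    have htotal : ∑' y : Fin n → X, ∏ j, P (y j) = 1 := (piPMF n P).tsum_coe
    rw [PMF.map_apply, ← (Fin.insertNthEquiv (fun _ => X) i).tsum_eq, ENNReal.tsum_prod']
    calc _ = ∑' x, if x = u then P x else 0 := tsum_congr fun x => by
          rcases eq_or_ne x u with rfl | hx
          · simp [Fin.insertNthEquiv, Fin.prod_univ_succAbove _ i, ENNReal.tsum_mul_left, htotal]
          · simp [hx, hx.symm]
      _ = P u := tsum_ite_eq u _

theorem log_piPMF_div_piPMF {Q R : PMF X} {y : Fin n → X} (hQ : ∀ i, Q (y i) ≠ 0)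
    (hR : ∀ i, R (y i) ≠ 0) :
    Real.log ((piPMF n Q y).toReal / (piPMF n R y).toReal)
      = ∑ i, Real.log ((Q (y i)).toReal / (R (y i)).toReal) := by
  have hne : ∀ S : PMF X, (∀ i, S (y i) ≠ 0) → ∀ i, (S (y i)).toReal ≠ 0 := fun S hS i =>
    ENNReal.toReal_ne_zero.2 ⟨hS i, S.apply_ne_top _⟩
  rw [piPMF_apply, piPMF_apply, ENNReal.toReal_prod, ENNReal.toReal_prod,
    ← Finset.prod_div_distrib, Real.log_prod]
  exact fun i _ => div_ne_zero (hne Q hQ i) (hne R hR i)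

theorem log_div_piPMF_of_eq_div {P ω : PMF X} {μ : PMF (Fin n → X)} {c : ℝ≥0∞}
    {y : Fin n → X} (hμ : μ y = piPMF n P y / c) (hμ0 : μ y ≠ 0) (hc0 : c ≠ 0) (hc : c ≠ ⊤)
    (hω : ∀ i, ω (y i) ≠ 0) :
    Real.log ((μ y).toReal / (piPMF n ω y).toReal)
      = -(∑ i, Real.log ((ω (y i)).toReal / (P (y i)).toReal)) - Real.log c.toReal := by
  have hPn : piPMF n P y ≠ 0 := fun h => hμ0 (by rw [hμ, h, ENNReal.zero_div])
  have hP : ∀ i, P (y i) ≠ 0 := fun i =>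
    Finset.prod_ne_zero_iff.1 (by rwa [piPMF_apply] at hPn) i (Finset.mem_univ i)
  have hPn' : (piPMF n P y).toReal ≠ 0 :=
    ENNReal.toReal_ne_zero.2 ⟨hPn, (piPMF n P).apply_ne_top y⟩
  have hωn : (piPMF n ω y).toReal ≠ 0 := ENNReal.toReal_ne_zero.2
    ⟨by rw [piPMF_apply]; exact Finset.prod_ne_zero_iff.2 fun i _ => hω i,
      (piPMF n ω).apply_ne_top y⟩
  rw [hμ, ENNReal.toReal_div, div_right_comm,
    Real.log_div (div_ne_zero hPn' hωn) (ENNReal.toReal_ne_zero.2 ⟨hc0, hc⟩),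
    ← inv_div, Real.log_inv, log_piPMF_div_piPMF hω hP]

theorem toReal_marginal_le_inv_mul [NeZero n] {P ω : PMF X} {μ : PMF (Fin n → X)} {c : ℝ≥0∞}
    (hc0 : c ≠ 0) (hμ : ∀ y, μ y ≠ 0 → μ y = piPMF n P y / c)
    (hω : ∀ i, ω = μ.map (fun y => y i)) (u : X) :
    (ω u).toReal ≤ c.toReal⁻¹ * (P u).toReal := by
  have hμ_le : ∀ y, μ y ≤ c⁻¹ * piPMF n P y := fun y => by
    by_cases hy : μ y = 0
    · simp [hy]
    · rw [hμ y hy, ENNReal.div_eq_inv_mul]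
  have h := PMF.map_apply_le_mul_map_apply hμ_le (fun y => y 0) u
  rw [← hω, piPMF_map_eval] at h
  simpa using ENNReal.toReal_mono (ENNReal.mul_ne_top (by simpa using hc0) (P.apply_ne_top u)) h

variable [Countable X] [MeasurableSpace X] [MeasurableSingletonClass X]

theorem integrable_sum_eval {μ : PMF (Fin n → X)} {ω : PMF X}
    (hω : ∀ i, ω = μ.map (fun y => y i)) {g : X → ℝ} (hg : Integrable g ω.toMeasure) :
    Integrable (fun y => ∑ i, g (y i)) μ.toMeasure :=
  integrable_finsetSum _ fun i _ => (PMF.integrable_comp_iff μ (fun y => y i) g).2 (hω i ▸ hg)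

theorem integral_sum_eval {μ : PMF (Fin n → X)} {ω : PMF X}
    (hω : ∀ i, ω = μ.map (fun y => y i)) {g : X → ℝ} (hg : Integrable g ω.toMeasure) :
    ∫ y, ∑ i, g (y i) ∂μ.toMeasure = n * ∫ u, g u ∂ω.toMeasure := by
  have hmarg : ∀ i, ∫ y, g (y i) ∂μ.toMeasure = ∫ u, g u ∂ω.toMeasure := fun i => by
    rw [PMF.integral_comp μ (fun y => y i) g, ← hω i]
  rw [integral_finsetSum _ fun i _ => (PMF.integrable_comp_iff μ (fun y => y i) g).2 (hω i ▸ hg)]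
  simp [hmarg]

theorem klDiv_piPMF_marginal_eq [NeZero n] {P ω : PMF X} {μ : PMF (Fin n → X)} {c : ℝ≥0∞}
    (hc0 : c ≠ 0) (hc : c ≠ ⊤) (hμ : ∀ y, μ y ≠ 0 → μ y = piPMF n P y / c)
    (hω : ∀ i, ω = μ.map (fun y => y i)) :
    klDiv μ (piPMF n ω) = -(n * klDiv ω P) - Real.log c.toReal := by
  set ℓ : X → ℝ := fun u => Real.log ((ω u).toReal / (P u).toReal)
  have hℓ : Integrable ℓ ω.toMeasure :=
    PMF.integrable_log_div_of_le_mul (toReal_marginal_le_inv_mul hc0 hμ hω)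
  have hneg : Integrable (fun y => -∑ i, ℓ (y i)) μ.toMeasure := (integrable_sum_eval hω hℓ).neg
  calc klDiv μ (piPMF n ω)
      = ∑' y, (μ y).toReal * (-(∑ i, ℓ (y i)) - Real.log c.toReal) := tsum_congr fun y => by
        by_cases hy : μ y = 0
        · simp [hy]
        have hωy : ∀ i, ω (y i) ≠ 0 := fun i => by
          rw [hω i, ← PMF.mem_support_iff, PMF.mem_support_map_iff]
          exact ⟨y, hy, rfl⟩
        rw [log_div_piPMF_of_eq_div (hμ y hy) hy hc0 hc hωy]
    _ = ∫ y, -(∑ i, ℓ (y i)) - Real.log c.toReal ∂μ.toMeasure :=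
      (PMF.integral_eq_tsum _ _ (hneg.sub (integrable_const _))).symm
    _ = -(n * klDiv ω P) - Real.log c.toReal := by
      rw [integral_sub hneg (integrable_const _), integral_neg, integral_sum_eval hω hℓ,
        integral_const, ← klDiv_eq_integral hℓ]
      simp

end Product

/-- Exact identity (Theorem 3, Eq. (3) of the paper):
`(1/n) ln P(P̂_n ∈ A) = - D(ω_A ‖ P) - (1/n) D(μ_A ‖ ω_A^n)`. -/
theorem sanov_exact_identity {X : Type*} [Countable X] [MeasurableSpace X] [MeasurableSingletonClass X]
    (n : ℕ) [NeZero n] (P : PMF X) (A : Set (PMF X))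
    (hA : 0 < probIn n P A)
    (μA : PMF (Fin n → X))
    (hμA : ∀ y : Fin n → X,
      μA y = (piPMF n P).toOuterMeasure ({y} ∩ {Z | empiricalPMF n Z ∈ A}) / probIn n P A)
    (ωA : PMF X)
    (hωA : ∀ i : Fin n, ωA = μA.map (fun Z => Z i)) :
    (1 / (n : ℝ)) * Real.log (probIn n P A).toReal =
      - klDiv ωA P - (1 / (n : ℝ)) * klDiv μA (piPMF n ωA) := by
  have hp_top : probIn n P A ≠ ⊤ := by
    simpa [probIn, PMF.toOuterMeasure_apply] using (piPMF n P).tsum_coe_indicator_ne_top _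
  have hμ : ∀ y, μA y ≠ 0 → μA y = piPMF n P y / probIn n P A := fun _ hy =>
    PMF.apply_eq_div_of_cond hμA hy
  have hn : (n : ℝ) ≠ 0 := NeZero.ne _
  rw [klDiv_piPMF_marginal_eq hA.ne' hp_top hμ hωA]
  field_simp
  ring
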